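/- arXiv:1902.11168 — 8 statements merged into one kernel-verified Lean document; each statement's English description precedes it below -/
import Mathlib

section
/- Let α ∈ (0, π/2), ε ∈ (0, 1), and let n be a positive natural number with n ≥ log(1/ε) / log(1/sin α). Let θ ∈ [-α, α] and set p = (1 + cos θ)/2. Then the probability that a Binomial(n, p) random variable takes a value at most n/2 is at most ε; explicitly, ∑_{k=0}^{⌊n/2⌋} C(n,k) p^k (1-p)^{n-k} ≤ ε. (Consequently, when the unknown angle lies in [-α, α], the majority of n independent measurements, each equal to 1 with probability p, is 1 with probability at least 1 - ε.) -/
open Real Finset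

/-- Theorem 1 (measurements for sign determination): if the unknown angle `θ` lies in
`[-α, α]` and `n ≥ log(1/ε) / log(1/sin α)`, then the probability that at most half of
`n` Bernoulli(`p`) measurements (with `p = (1 + cos θ)/2`) equal 1 is at most `ε`. -/
theorem stmt_0 (α ε : ℝ) (hα : α ∈ Set.Ioo 0 (π / 2)) (hε : ε ∈ Set.Ioo (0 : ℝ) 1)
    (n : ℕ) (hn : 0 < n)
    (hn' : (n : ℝ) ≥ Real.log (1 / ε) / Real.log (1 / Real.sin α))
    (θ : ℝ) (hθ : θ ∈ Set.Icc (-α) α) (p : ℝ) (hp : p = (1 + Real.cos θ) / 2) :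
    ∑ k ∈ Finset.range (n / 2 + 1), (n.choose k : ℝ) * p ^ k * (1 - p) ^ (n - k) ≤ ε := by
  obtain ⟨hα0, hα1⟩ := hα
  obtain ⟨hε0, hε1⟩ := hε
  obtain ⟨hθ1, hθ2⟩ := hθ
  have hπ := Real.pi_pos
  have hcosα : 0 < Real.cos α := Real.cos_pos_of_mem_Ioo ⟨by linarith, hα1⟩
  have hcosθ : Real.cos α ≤ Real.cos θ := by
    rw [← Real.cos_abs θ]
    apply Real.cos_le_cos_of_nonneg_of_le_pi (abs_nonneg θ) (by linarith)
    rw [abs_le]; exact ⟨hθ1, hθ2⟩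
  have hc1 : Real.cos θ ≤ 1 := Real.cos_le_one θ
  have hp0 : (0:ℝ) ≤ 1 - p := by rw [hp]; linarith
  have hp2 : 1 - p ≤ p := by rw [hp]; linarith
  have hppos : 0 ≤ p := by linarith
  set q := Real.sqrt (p * (1 - p)) with hq
  have hq0 : 0 ≤ q := Real.sqrt_nonneg _
  have hqsq : q ^ 2 = p * (1 - p) := Real.sq_sqrt (by positivity)
  have h1pq : 1 - p ≤ q := by
    have h : (1 - p) ^ 2 ≤ p * (1 - p) := by nlinarith
    nlinarith [hqsq]
  have hterm : ∀ k ∈ Finset.range (n / 2 + 1),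
      (n.choose k : ℝ) * p ^ k * (1 - p) ^ (n - k) ≤ (n.choose k : ℝ) * q ^ n := by
    intro k hk
    have hk2 : 2 * k ≤ n := by
      have := Finset.mem_range.mp hk; omega
    have e1 : p ^ k * (1 - p) ^ (n - k) = (p * (1 - p)) ^ k * (1 - p) ^ (n - 2 * k) := by
      have h : n - k = k + (n - 2 * k) := by omega
      rw [h, pow_add, mul_pow]; ring
    have key : p ^ k * (1 - p) ^ (n - k) ≤ q ^ n := by
      rw [e1, ← hqsq, ← pow_mul]
      calc q ^ (2 * k) * (1 - p) ^ (n - 2 * k)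
          ≤ q ^ (2 * k) * q ^ (n - 2 * k) := by
            apply mul_le_mul_of_nonneg_left (pow_le_pow_left₀ hp0 h1pq _) (by positivity)
        _ = q ^ n := by rw [← pow_add]; congr 1; omega
    calc (n.choose k : ℝ) * p ^ k * (1 - p) ^ (n - k)
        = (n.choose k : ℝ) * (p ^ k * (1 - p) ^ (n - k)) := by ring
      _ ≤ (n.choose k : ℝ) * q ^ n := by
          apply mul_le_mul_of_nonneg_left key (by positivity)
  have hsum : ∑ k ∈ Finset.range (n / 2 + 1), (n.choose k : ℝ) ≤ 2 ^ n := by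
    have h1 : ∑ k ∈ Finset.range (n / 2 + 1), n.choose k
        ≤ ∑ k ∈ Finset.range (n + 1), n.choose k := by
      apply Finset.sum_le_sum_of_subset (Finset.range_subset_range.mpr (by omega))
    rw [Nat.sum_range_choose] at h1
    exact_mod_cast h1
  have step1 : ∑ k ∈ Finset.range (n / 2 + 1), (n.choose k : ℝ) * p ^ k * (1 - p) ^ (n - k)
      ≤ (2 * q) ^ n := by
    calc ∑ k ∈ Finset.range (n / 2 + 1), (n.choose k : ℝ) * p ^ k * (1 - p) ^ (n - k)
        ≤ ∑ k ∈ Finset.range (n / 2 + 1), (n.choose k : ℝ) * q ^ n :=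
          Finset.sum_le_sum hterm
      _ = (∑ k ∈ Finset.range (n / 2 + 1), (n.choose k : ℝ)) * q ^ n := by
          rw [Finset.sum_mul]
      _ ≤ 2 ^ n * q ^ n := by
          apply mul_le_mul_of_nonneg_right hsum (by positivity)
      _ = (2 * q) ^ n := by rw [mul_pow]
  have hps : p * (1 - p) = (Real.sin θ / 2) ^ 2 := by
    rw [hp]
    have := Real.sin_sq_add_cos_sq θ
    nlinarith
  have h2q : 2 * q = |Real.sin θ| := by
    rw [hq, hps, Real.sqrt_sq_eq_abs, abs_div]
    rw [abs_of_pos (by norm_num : (0:ℝ) < 2)]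
    ring
  have hsinα0 : 0 < Real.sin α := Real.sin_pos_of_pos_of_lt_pi hα0 (by linarith)
  have hsinα1 : Real.sin α < 1 := by
    have := Real.sin_lt_sin_of_lt_of_le_pi_div_two (by linarith : -(π/2) ≤ α) (le_refl (π/2)) hα1
    rwa [Real.sin_pi_div_two] at this
  have hsθ : |Real.sin θ| ≤ Real.sin α := by
    rw [abs_le]
    constructor
    · rw [← Real.sin_neg]
      apply Real.sin_le_sin_of_le_of_le_pi_div_two (by linarith : -(π/2) ≤ -α) (by linarith) hθ1
    · apply Real.sin_le_sin_of_le_of_le_pi_div_two (by linarith : -(π/2) ≤ θ) (by linarith) hθ2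
  have step2 : (2 * q) ^ n ≤ Real.sin α ^ n := by
    rw [h2q]
    exact pow_le_pow_left₀ (abs_nonneg _) hsθ n
  have step3 : Real.sin α ^ n ≤ ε := by
    have hlogs : 0 < Real.log (1 / Real.sin α) := by
      apply Real.log_pos
      exact (one_lt_div hsinα0).mpr hsinα1
    have h2 : Real.log (1 / ε) ≤ (n : ℝ) * Real.log (1 / Real.sin α) := by
      rw [ge_iff_le, div_le_iff₀ hlogs] at hn'
      linarith
    rw [Real.log_div one_ne_zero hε0.ne', Real.log_div one_ne_zero hsinα0.ne',
      Real.log_one] at h2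
    have h3 : (n : ℝ) * Real.log (Real.sin α) ≤ Real.log ε := by linarith
    have hexp : Real.sin α ^ n = Real.exp ((n : ℝ) * Real.log (Real.sin α)) := by
      rw [← Real.exp_log (pow_pos hsinα0 n), Real.log_pow]
    rw [hexp]
    calc Real.exp ((n : ℝ) * Real.log (Real.sin α)) ≤ Real.exp (Real.log ε) :=
          Real.exp_le_exp.mpr h3
      _ = ε := Real.exp_log hε0
  linarith
end

section
/- Let n be a natural number and let p ∈ [1/2, 1]. Then ∑_{k=0}^{⌊n/2⌋} C(n,k) p^k (1-p)^{n-k} ≤ (4p(1-p))^{n/2}. -/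
open Real Finset

/-- Chernoff-type bound: for `p ∈ [1/2, 1]`, the probability that a Binomial(n, p)
random variable is at most `n/2` is bounded by `(4p(1-p))^(n/2)`. -/
theorem stmt_1 (n : ℕ) (p : ℝ) (hp : p ∈ Set.Icc (1 / 2 : ℝ) 1) :
    ∑ k ∈ Finset.range (n / 2 + 1), (n.choose k : ℝ) * p ^ k * (1 - p) ^ (n - k) ≤
      (4 * p * (1 - p)) ^ ((n : ℝ) / 2) := by
  obtain ⟨hp1, hp2⟩ := hp
  rcases eq_or_lt_of_le hp2 with h1 | h1
  · -- p = 1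
    subst h1
    rcases Nat.eq_zero_or_pos n with hn | hn
    · subst hn; norm_num
    · have hL : ∑ k ∈ Finset.range (n / 2 + 1),
          (n.choose k : ℝ) * 1 ^ k * (1 - 1) ^ (n - k) = 0 := by
        apply Finset.sum_eq_zero
        intro k hk
        have hk' : k < n := by
          have := Finset.mem_range.mp hk
          omega
        have : n - k ≠ 0 := by omega
        simp [this]
      rw [hL]
      exact Real.rpow_nonneg (by norm_num) _
  · -- p < 1
    have hq0 : (0:ℝ) < 1 - p := by linarith
    have hp0 : (0:ℝ) < p := by linarith
    have hpq : 1 ≤ p / (1 - p) := by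
      rw [le_div_iff₀ hq0]; linarith
    set q := 1 - p with hq
    -- bound each term
    have key : ∀ k ∈ Finset.range (n / 2 + 1),
        (n.choose k : ℝ) * p ^ k * q ^ (n - k) ≤
          (n.choose k : ℝ) * (p * q) ^ ((n:ℝ)/2) := by
      intro k hk
      have hkn2 : k ≤ n / 2 := by
        have := Finset.mem_range.mp hk; omega
      have hkn : k ≤ n := le_trans hkn2 (Nat.div_le_self n 2)
      have hkR : (k:ℝ) ≤ (n:ℝ)/2 := by
        have : 2 * k ≤ n := by omega
        have h2 := (Nat.cast_le (α := ℝ)).mpr this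
        push_cast at h2
        linarith
      rw [mul_assoc]
      apply mul_le_mul_of_nonneg_left _ (Nat.cast_nonneg _)
      have e1 : p ^ k * q ^ (n - k) = (p / q) ^ (k:ℝ) * q ^ (n:ℝ) := by
        rw [Real.div_rpow hp0.le hq0.le, Real.rpow_natCast,
          div_mul_eq_mul_div, mul_div_assoc]
        congr 1
        rw [eq_div_iff (by positivity), ← Real.rpow_natCast q (n - k),
          ← Real.rpow_add hq0]
        congr 1
        push_cast [Nat.cast_sub hkn]
        ring
      have e2 : (p * q) ^ ((n:ℝ)/2) = (p / q) ^ ((n:ℝ)/2) * q ^ (n:ℝ) := by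
        rw [Real.div_rpow hp0.le hq0.le, Real.mul_rpow hp0.le hq0.le,
          div_mul_eq_mul_div, mul_div_assoc]
        congr 1
        rw [eq_div_iff (by positivity), ← Real.rpow_add hq0]
        congr 1
        ring
      rw [e1, e2]
      apply mul_le_mul_of_nonneg_right _ (Real.rpow_nonneg hq0.le _)
      exact Real.rpow_le_rpow_of_exponent_le hpq hkR
    calc ∑ k ∈ Finset.range (n / 2 + 1), (n.choose k : ℝ) * p ^ k * q ^ (n - k)
        ≤ ∑ k ∈ Finset.range (n / 2 + 1), (n.choose k : ℝ) * (p * q) ^ ((n:ℝ)/2) :=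
          Finset.sum_le_sum key
      _ = (∑ k ∈ Finset.range (n / 2 + 1), (n.choose k : ℝ)) * (p * q) ^ ((n:ℝ)/2) := by
          rw [Finset.sum_mul]
      _ ≤ (2:ℝ) ^ n * (p * q) ^ ((n:ℝ)/2) := by
          apply mul_le_mul_of_nonneg_right _ (Real.rpow_nonneg (by positivity) _)
          have h1 : ∑ k ∈ Finset.range (n / 2 + 1), (n.choose k : ℝ) ≤
              ∑ k ∈ Finset.range (n + 1), (n.choose k : ℝ) := by
            apply Finset.sum_le_sum_of_subset_of_nonneg
            · apply Finset.range_subset_range.mpr; omega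
            · intros; positivity
          have h2 : ∑ k ∈ Finset.range (n + 1), (n.choose k : ℝ) = 2 ^ n := by
            rw [← Nat.cast_sum]
            rw [Nat.sum_range_choose]
            push_cast; ring
          linarith
      _ = (4 * p * q) ^ ((n : ℝ) / 2) := by
          have h4 : (4:ℝ) ^ ((n:ℝ)/2) = 2 ^ n := by
            have e : (4:ℝ) = (2:ℝ) ^ (2:ℝ) := by
              rw [show (2:ℝ) = ((2:ℕ):ℝ) by norm_num, Real.rpow_natCast]; norm_num
            rw [e, ← Real.rpow_mul (by norm_num),
              show (2:ℝ) * ((n:ℝ)/2) = (n:ℝ) by ring, Real.rpow_natCast]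
          rw [mul_assoc, Real.mul_rpow (by norm_num) (mul_nonneg hp0.le hq0.le), h4]
end

section
/- Let 0 < η ≤ π/4 and, for φ ∈ [0, π/4], define α(φ) = cos(φ+η)/sin(φ+η) and δ(φ) = (cos φ - α(φ)·sin φ)/(1 + α(φ)). Then sin(φ+η) > 0 and 1 + α(φ) > 0 for all such φ, and δ(φ) ≥ sin(η)/√2 for all φ ∈ [0, π/4], with equality at φ = π/4 - η. -/
open Real

/-- The maximal box half-side `δ(φ) = (cos φ - α(φ) sin φ)/(1 + α(φ))`, with
`α(φ) = cos(φ+η)/sin(φ+η)`, is minimized over `φ ∈ [0, π/4]` at `φ = π/4 - η`, where it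
equals `sin(η)/√2`. -/
theorem stmt_4 (η : ℝ) (hη : 0 < η) (hη' : η ≤ π / 4)
    (a d : ℝ → ℝ)
    (ha : ∀ φ, a φ = Real.cos (φ + η) / Real.sin (φ + η))
    (hd : ∀ φ, d φ = (Real.cos φ - a φ * Real.sin φ) / (1 + a φ)) :
    (∀ φ ∈ Set.Icc (0 : ℝ) (π / 4),
        0 < Real.sin (φ + η) ∧ 0 < 1 + a φ ∧ Real.sin η / Real.sqrt 2 ≤ d φ) ∧
      d (π / 4 - η) = Real.sin η / Real.sqrt 2 := by
  have hπ : 0 < π := Real.pi_pos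
  -- basic facts for φ + η ∈ (0, π/2]
  have hbase : ∀ φ ∈ Set.Icc (0 : ℝ) (π / 4),
      0 < Real.sin (φ + η) ∧ 0 ≤ Real.cos (φ + η) := by
    intro φ hφ
    obtain ⟨h0, h1⟩ := hφ
    have hlt : φ + η ≤ π / 2 := by linarith
    have hgt : 0 < φ + η := by linarith
    constructor
    · exact Real.sin_pos_of_pos_of_lt_pi hgt (by linarith)
    · exact Real.cos_nonneg_of_mem_Icc ⟨by linarith, hlt⟩
  have hsinη : 0 < Real.sin η :=
    Real.sin_pos_of_pos_of_lt_pi hη (by linarith)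
  have key : ∀ φ, 0 < Real.sin (φ + η) → 0 ≤ Real.cos (φ + η) →
      d φ = Real.sin η / (Real.sin (φ + η) + Real.cos (φ + η)) := by
    intro φ hs hc
    have hsc : 0 < Real.sin (φ + η) + Real.cos (φ + η) := by linarith
    have hηeq : Real.sin η =
        Real.cos φ * Real.sin (φ + η) - Real.cos (φ + η) * Real.sin φ := by
      have := Real.sin_sub (φ + η) φ
      simp only [add_sub_cancel_left] at this
      linarith [this]
    rw [hd, ha]
    have h1 : (0:ℝ) < 1 + Real.cos (φ + η) / Real.sin (φ + η) := by positivity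
    rw [div_eq_div_iff h1.ne' hsc.ne']
    field_simp

    exact hηeq.symm
  have hle2 : ∀ φ, 0 < Real.sin (φ + η) → 0 ≤ Real.cos (φ + η) →
      Real.sin (φ + η) + Real.cos (φ + η) ≤ Real.sqrt 2 := by
    intro φ hs hc
    have hsq : (Real.sin (φ + η) + Real.cos (φ + η)) ^ 2 ≤ 2 := by
      nlinarith [Real.sin_sq_add_cos_sq (φ + η), sq_nonneg (Real.sin (φ + η) - Real.cos (φ + η))]
    have := Real.sqrt_le_sqrt hsq
    rwa [Real.sqrt_sq (by linarith)] at this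
  constructor
  · intro φ hφ
    obtain ⟨hs, hc⟩ := hbase φ hφ
    refine ⟨hs, ?_, ?_⟩
    · rw [ha]
      positivity
    · rw [key φ hs hc]
      have h2 : (0:ℝ) < Real.sqrt 2 := by positivity
      gcongr
      exact hle2 φ hs hc
  · have hmem : (π / 4 - η) ∈ Set.Icc (0 : ℝ) (π / 4) := ⟨by linarith, by linarith⟩
    obtain ⟨hs, hc⟩ := hbase _ hmem
    rw [key _ hs hc]
    have : π / 4 - η + η = π / 4 := by ring
    rw [this, Real.sin_pi_div_four, Real.cos_pi_div_four]
    congr 1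
    linarith
end

section
/- Fix δ > 0 and a natural number n with n ≥ max{1 + 1/δ², 3}. For p ∈ [0,1], let K_{n,δ}(p) = { k ∈ {0,1,…,n} : (p - δ/2)·n ≤ k ≤ (p + δ/2)·n } and let f_n(p) = 1 - ∑_{k ∈ K_{n,δ}(p)} C(n,k) p^k (1-p)^{n-k}. Let B = [0,1] ∩ { k/n + δ/2 : k ∈ {0,…,n} } ∪ { k/n - δ/2 : k ∈ {0,…,n} }. Then f_n is convex on every open subinterval of [0,1] that contains no point of B; that is, f_n is piecewise convex on [0,1] with breakpoints contained in B. -/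
open Real Finset

private lemma tele (W : ℕ → ℝ) {k0 k1 : ℕ} (h : k0 ≤ k1) :
    ∑ k ∈ Finset.Icc k0 k1, (W k - W (k+1)) = W k0 - W (k1+1) := by
  induction k1, h using Nat.le_induction with
  | base => simp
  | succ m hm ih => rw [Finset.sum_Icc_succ_top (by omega), ih]; ring

private noncomputable def wfun (n : ℕ) : ℕ → ℝ → ℝ
  | 0, _ => 0
  | (j+1), p => (n : ℝ) * ((n-1).choose j) * (p ^ j * (1-p) ^ (n-1-j))

private noncomputable def wd (n : ℕ) : ℕ → ℝ → ℝ
  | 0, _ => 0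
  | (j+1), p => (n : ℝ) * ((n-1).choose j) *
      ((j : ℝ) * p ^ (j-1) * (1-p) ^ (n-1-j)
        - ((n-1-j : ℕ) : ℝ) * p ^ j * (1-p) ^ (n-1-j-1))

private lemma hasDerivAt_wfun (n k : ℕ) (p : ℝ) :
    HasDerivAt (fun x => wfun n k x) (wd n k p) p := by
  rcases k with _ | j
  · simpa [wfun, wd] using hasDerivAt_const p (0:ℝ)
  · have h1 : HasDerivAt (fun x : ℝ => x ^ j) ((j : ℝ) * p ^ (j-1)) p := hasDerivAt_pow j p
    have h2 : HasDerivAt (fun x : ℝ => (1 - x) ^ (n-1-j))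
        (((n-1-j : ℕ) : ℝ) * (1 - p) ^ (n-1-j-1) * (-1)) p := by
      simpa using ((hasDerivAt_id p).const_sub (1:ℝ)).fun_pow (n-1-j)
    have h := (h1.fun_mul h2).const_mul ((n : ℝ) * ((n-1).choose j))
    have heq : (fun x => wfun n (j+1) x)
        = fun x : ℝ => ((n : ℝ) * ((n-1).choose j)) * (x ^ j * (1 - x) ^ (n-1-j)) := by
      funext x; simp [wfun]
    rw [heq]
    refine h.congr_deriv ?_
    simp only [wd]
    ring

private noncomputable def td (n k : ℕ) (p : ℝ) : ℝ :=
  (n.choose k : ℝ) * ((k : ℝ) * p ^ (k-1) * (1-p) ^ (n-k)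
    - ((n-k : ℕ) : ℝ) * p ^ k * (1-p) ^ (n-k-1))

private lemma hasDerivAt_term (n k : ℕ) (p : ℝ) :
    HasDerivAt (fun x : ℝ => (n.choose k : ℝ) * x ^ k * (1 - x) ^ (n - k)) (td n k p) p := by
  have h1 : HasDerivAt (fun x : ℝ => (n.choose k : ℝ) * x ^ k)
      ((n.choose k : ℝ) * ((k : ℝ) * p ^ (k-1))) p := (hasDerivAt_pow k p).const_mul _
  have h2 : HasDerivAt (fun x : ℝ => (1 - x) ^ (n-k))
      (((n-k : ℕ) : ℝ) * (1 - p) ^ (n-k-1) * (-1)) p := by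
    simpa using ((hasDerivAt_id p).const_sub (1:ℝ)).fun_pow (n-k)
  have h := h1.fun_mul h2
  refine h.congr_deriv ?_
  simp only [td]
  ring

private lemma td_eq (n k : ℕ) (hk : k ≤ n) (p : ℝ) :
    td n k p = wfun n k p - wfun n (k+1) p := by
  rcases k with _ | j
  · simp only [td, wfun, Nat.choose_zero_right, Nat.cast_one, Nat.cast_zero, Nat.sub_zero,
      Nat.choose_self]
    push_cast
    ring_nf
  · have hn1 : 1 ≤ n := by omega
    have hs : (n-1).succ = n := by omega
    have h1 : n * (n-1).choose j = n.choose (j+1) * (j+1) := by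
      have h := Nat.add_one_mul_choose_eq (n-1) j
      rw [show (n-1)+1 = n from by omega] at h
      exact h
    have h2 : n * (n-1).choose (j+1) = n.choose (j+1) * (n - (j+1)) := by
      have ha := Nat.add_one_mul_choose_eq (n-1) (j+1)
      rw [show (n-1)+1 = n from by omega] at ha
      rw [ha]
      exact Nat.choose_succ_right_eq n (j+1)
    have h1' : (n : ℝ) * ((n-1).choose j) = (n.choose (j+1) : ℝ) * ((j:ℝ)+1) := by
      exact_mod_cast congrArg (Nat.cast (R := ℝ)) h1
    have h2' : (n : ℝ) * ((n-1).choose (j+1)) = (n.choose (j+1) : ℝ) * ((n - (j+1) : ℕ) : ℝ) := by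
      exact_mod_cast congrArg (Nat.cast (R := ℝ)) h2
    rw [show n - (j+1) = n - 1 - j from by omega] at h2'
    simp only [td, wfun]
    rw [show n - (j+1) - 1 = n - 1 - (j+1) from by omega,
      show n - (j+1) = n - 1 - j from by omega,
      show (j+1) - 1 = j from rfl]
    push_cast
    linear_combination (p ^ j * (1-p) ^ (n-1-j)) * h1'.symm
      - (p ^ (j+1) * (1-p) ^ (n-1-(j+1))) * h2'.symm

private lemma wd_nonneg {n k1 : ℕ} {x : ℝ} (hx0 : 0 < x) (hx1 : x < 1)
    (h1 : 1 ≤ k1) (hlt : k1 < n) (hnx : (n:ℝ)*x ≤ k1) : 0 ≤ wd n (k1+1) x := by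
  have hq0 : (0:ℝ) < 1 - x := by linarith
  simp only [wd]
  have hin : ((n-1-k1 : ℕ) : ℝ) * x ^ k1 * (1-x) ^ (n-1-k1-1)
      ≤ (k1 : ℝ) * x ^ (k1-1) * (1-x) ^ (n-1-k1) := by
    rcases Nat.eq_zero_or_pos (n-1-k1) with hz | hpos
    · rw [hz]
      simp only [Nat.cast_zero, zero_mul]
      exact mul_nonneg (mul_nonneg (Nat.cast_nonneg _) (pow_nonneg hx0.le _))
        (pow_nonneg hq0.le _)
    · have hxp : x ^ k1 = x ^ (k1-1) * x := by
        conv_lhs => rw [show k1 = (k1-1)+1 from by omega]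
        rw [pow_succ]
      have hqp : (1-x) ^ (n-1-k1) = (1-x) ^ (n-1-k1-1) * (1-x) := by
        conv_lhs => rw [show n-1-k1 = (n-1-k1-1)+1 from by omega]
        rw [pow_succ]
      rw [hxp, hqp]
      have hcast : ((n-1-k1 : ℕ) : ℝ) = (n:ℝ) - 1 - k1 := by
        push_cast [Nat.cast_sub (by omega : k1 ≤ n - 1), Nat.cast_sub (by omega : 1 ≤ n)]
        ring
      have hcoef : ((n-1-k1 : ℕ) : ℝ) * x ≤ (k1 : ℝ) * (1 - x) := by
        rw [hcast]; nlinarith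
      have hpos2 : (0:ℝ) ≤ x ^ (k1-1) * (1-x) ^ (n-1-k1-1) :=
        mul_nonneg (pow_nonneg hx0.le _) (pow_nonneg hq0.le _)
      have H := mul_le_mul_of_nonneg_right hcoef hpos2
      nlinarith [H]
  have hC : (0:ℝ) ≤ (n : ℝ) * ((n-1).choose k1) := by positivity
  nlinarith [mul_le_mul_of_nonneg_left (sub_nonpos.mpr hin) hC]

private lemma wd_nonpos {n j : ℕ} {x : ℝ} (hx0 : 0 < x) (hx1 : x < 1)
    (hnx : ((j:ℝ)+1) ≤ (n:ℝ)*x) : wd n (j+1) x ≤ 0 := by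
  have hq0 : (0:ℝ) < 1 - x := by linarith
  have hjn : (j:ℝ) + 1 < n := by nlinarith
  have hjn' : j + 1 < n := by
    have h : ((j+1 : ℕ) : ℝ) < (n : ℝ) := by push_cast; linarith
    exact_mod_cast h
  simp only [wd]
  have hin : (j : ℝ) * x ^ (j-1) * (1-x) ^ (n-1-j)
      ≤ ((n-1-j : ℕ) : ℝ) * x ^ j * (1-x) ^ (n-1-j-1) := by
    rcases Nat.eq_zero_or_pos j with hz | hjpos
    · rw [hz]
      simp only [Nat.cast_zero, zero_mul]
      exact mul_nonneg (mul_nonneg (Nat.cast_nonneg _) (pow_nonneg hx0.le _))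
        (pow_nonneg hq0.le _)
    · have hxp : x ^ j = x ^ (j-1) * x := by
        conv_lhs => rw [show j = (j-1)+1 from by omega]
        rw [pow_succ]
      have hqp : (1-x) ^ (n-1-j) = (1-x) ^ (n-1-j-1) * (1-x) := by
        conv_lhs => rw [show n-1-j = (n-1-j-1)+1 from by omega]
        rw [pow_succ]
      rw [hxp, hqp]
      have hcast : ((n-1-j : ℕ) : ℝ) = (n:ℝ) - 1 - j := by
        push_cast [Nat.cast_sub (by omega : j ≤ n - 1), Nat.cast_sub (by omega : 1 ≤ n)]
        ring
      have hcoef : (j : ℝ) * (1 - x) ≤ ((n-1-j : ℕ) : ℝ) * x := by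
        rw [hcast]; nlinarith
      have hpos2 : (0:ℝ) ≤ x ^ (j-1) * (1-x) ^ (n-1-j-1) :=
        mul_nonneg (pow_nonneg hx0.le _) (pow_nonneg hq0.le _)
      have H := mul_le_mul_of_nonneg_right hcoef hpos2
      nlinarith [H]
  have hC : (0:ℝ) ≤ (n : ℝ) * ((n-1).choose j) := by positivity
  nlinarith [mul_le_mul_of_nonneg_left (sub_nonpos.mpr hin) hC]

private lemma convexOn_congr {s : Set ℝ} {f g : ℝ → ℝ} (h : ∀ x ∈ s, f x = g x)
    (hg : ConvexOn ℝ s g) : ConvexOn ℝ s f :=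
  ⟨hg.1, fun x hx y hy a b ha hb hab => by
    rw [h _ hx, h _ hy, h _ (hg.1 hx hy ha hb hab)]
    exact hg.2 hx hy ha hb hab⟩

/-- Theorem 3 (piecewise convexity of the box-sampling error): for `n ≥ max {1 + 1/δ², 3}`,
the error probability `f_n(p) = 1 - Pr(X ∈ K_{n,δ}(p))` of a Binomial(n, p) variable is
convex on every open subinterval of `[0,1]` that contains none of the breakpoints
`k/n ± δ/2`. -/
theorem stmt_5 (δ : ℝ) (hδ : 0 < δ) (n : ℕ)
    (hn1 : (n : ℝ) ≥ 1 + 1 / δ ^ 2) (hn2 : n ≥ 3)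
    (f : ℝ → ℝ)
    (hf : ∀ p, f p = 1 - ∑ k ∈ (Finset.range (n + 1)).filter
      (fun k : ℕ => (p - δ / 2) * n ≤ (k : ℝ) ∧ (k : ℝ) ≤ (p + δ / 2) * n),
        (n.choose k : ℝ) * p ^ k * (1 - p) ^ (n - k))
    (B : Set ℝ)
    (hB : B = Set.Icc (0 : ℝ) 1 ∩
      {x | ∃ k : ℕ, k ≤ n ∧ (x = (k : ℝ) / n + δ / 2 ∨ x = (k : ℝ) / n - δ / 2)}) :
    ∀ a b : ℝ, Set.Ioo a b ⊆ Set.Icc (0 : ℝ) 1 → Set.Ioo a b ∩ B = ∅ →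
      ConvexOn ℝ (Set.Ioo a b) f := by
  intro a b hsub hdisj
  rcases le_or_gt b a with hba | hab
  · rw [Set.Ioo_eq_empty (by exact fun h => absurd hba (not_le.mpr h))]
    exact ⟨convex_empty, fun x hx => absurd hx (Set.notMem_empty x)⟩
  -- basic facts
  have hn0 : (0:ℝ) < n := by
    have : (3:ℝ) ≤ n := by exact_mod_cast hn2
    linarith
  have ha0 : 0 ≤ a := by
    by_contra h
    push_neg at h
    have hx : (a + min b 0) / 2 ∈ Set.Ioo a b := by
      constructor
      · have : a < min b 0 := lt_min hab h
        linarith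
      · have h1 : min b 0 ≤ b := min_le_left _ _
        linarith
    have := (hsub hx).1
    have h2 : min b 0 ≤ 0 := min_le_right _ _
    linarith
  have hb1 : b ≤ 1 := by
    by_contra h
    push_neg at h
    have hx : (max a 1 + b) / 2 ∈ Set.Ioo a b := by
      constructor
      · have h1 : a ≤ max a 1 := le_max_left _ _
        have h2 : max a 1 < b := max_lt (lt_of_le_of_lt (by linarith [(hsub ⟨lt_of_le_of_lt (le_refl a) (by linarith : a < (a+b)/2), (by linarith : (a+b)/2 < b)⟩).2] : a ≤ 1) h) h
        linarith
      · have h2 : max a 1 < b := max_lt (lt_of_le_of_lt (by linarith [(hsub ⟨(by linarith : a < (a+b)/2), (by linarith : (a+b)/2 < b)⟩).2] : a ≤ 1) h) h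
        linarith
    have := (hsub hx).2
    have h1 : (1:ℝ) ≤ max a 1 := le_max_right _ _
    linarith
  have hδn : (2:ℝ) ≤ δ * n := by
    have hmul := mul_le_mul_of_nonneg_left hn1 hδ.le
    have hid : δ * (1 + 1/δ^2) = δ + 1/δ := by
      field_simp
    rw [hid] at hmul
    have hinv : δ * (1/δ) = 1 := by field_simp
    nlinarith [sq_nonneg (δ - 1)]
  -- breakpoints are not in the interval
  have hnB : ∀ x ∈ Set.Ioo a b, x ∉ B := by
    intro x hx hxB
    have : x ∈ Set.Ioo a b ∩ B := ⟨hx, hxB⟩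
    rw [hdisj] at this
    exact this
  -- constancy of the condition on the interval
  have hconst : ∀ k : ℕ, k ≤ n → ∀ p ∈ Set.Ioo a b, ∀ q ∈ Set.Ioo a b,
      ((p - δ/2) * n ≤ (k:ℝ) ∧ (k:ℝ) ≤ (p + δ/2) * n) →
      ((q - δ/2) * n ≤ (k:ℝ) ∧ (k:ℝ) ≤ (q + δ/2) * n) := by
    intro k hk p hp q hq ⟨h1, h2⟩
    have hd1 : p - δ/2 ≤ (k:ℝ)/n := (le_div_iff₀ hn0).mpr h1
    have hd2 : (k:ℝ)/n ≤ p + δ/2 := (div_le_iff₀ hn0).mpr h2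
    have hdnotin : ((k:ℝ)/n + δ/2) ∉ Set.Ioo a b := by
      intro hmem
      exact hnB _ hmem (by rw [hB]; exact ⟨hsub hmem, k, hk, Or.inl rfl⟩)
    have hcnotin : ((k:ℝ)/n - δ/2) ∉ Set.Ioo a b := by
      intro hmem
      exact hnB _ hmem (by rw [hB]; exact ⟨hsub hmem, k, hk, Or.inr rfl⟩)
    have hdge : b ≤ (k:ℝ)/n + δ/2 := by
      by_contra h
      push_neg at h
      exact hdnotin ⟨lt_of_lt_of_le hp.1 (by linarith), h⟩
    have hcle : (k:ℝ)/n - δ/2 ≤ a := by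
      by_contra h
      push_neg at h
      exact hcnotin ⟨h, lt_of_le_of_lt (by linarith) hp.2⟩
    constructor
    · have : q - δ/2 ≤ (k:ℝ)/n := by linarith [hq.2]
      exact (le_div_iff₀ hn0).mp this
    · have : (k:ℝ)/n ≤ q + δ/2 := by linarith [hq.1]
      exact (div_le_iff₀ hn0).mp this
  set p0 : ℝ := (a+b)/2 with hp0def
  have hp0 : p0 ∈ Set.Ioo a b := ⟨by simp only [hp0def]; linarith, by simp only [hp0def]; linarith⟩
  classical
  set S : Finset ℕ := (Finset.range (n+1)).filter
    (fun k : ℕ => (p0 - δ / 2) * n ≤ (k : ℝ) ∧ (k : ℝ) ≤ (p0 + δ / 2) * n) with hSdef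
  have hSmem : ∀ x ∈ Set.Ioo a b, ∀ k : ℕ,
      (k ∈ S ↔ (k ≤ n ∧ ((x - δ/2) * n ≤ (k:ℝ) ∧ (k:ℝ) ≤ (x + δ/2) * n))) := by
    intro x hx k
    rw [hSdef]
    simp only [Finset.mem_filter, Finset.mem_range, Nat.lt_succ_iff]
    constructor
    · rintro ⟨hk, hcond⟩
      exact ⟨hk, hconst k hk p0 hp0 x hx hcond⟩
    · rintro ⟨hk, hcond⟩
      exact ⟨hk, hconst k hk x hx p0 hp0 hcond⟩
  have hfS : ∀ p ∈ Set.Ioo a b,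
      f p = 1 - ∑ k ∈ S, (n.choose k : ℝ) * p ^ k * (1 - p) ^ (n - k) := by
    intro p hp
    rw [hf p]
    congr 1
    apply Finset.sum_congr _ (fun _ _ => rfl)
    apply Finset.filter_congr
    intro k hk
    simp only [Finset.mem_range, Nat.lt_succ_iff] at hk
    constructor
    · intro hcond
      exact hconst k hk p hp p0 hp0 hcond
    · intro hcond
      exact hconst k hk p0 hp0 p hp hcond
  rcases S.eq_empty_or_nonempty with hS | hS
  · refine convexOn_congr (g := fun _ => (1:ℝ)) ?_ (convexOn_const _ (convex_Ioo a b))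
    intro x hx
    rw [hfS x hx, hS]
    simp
  -- nonempty case
  set k0 : ℕ := S.min' hS with hk0def
  set k1 : ℕ := S.max' hS with hk1def
  have hk0S : k0 ∈ S := S.min'_mem hS
  have hk1S : k1 ∈ S := S.max'_mem hS
  have hk01 : k0 ≤ k1 := S.min'_le _ hk1S
  have hk1n : k1 ≤ n := ((hSmem p0 hp0 k1).mp hk1S).1
  have hSIcc : S = Finset.Icc k0 k1 := by
    ext k
    simp only [Finset.mem_Icc]
    constructor
    · intro hkS
      exact ⟨S.min'_le _ hkS, S.le_max' _ hkS⟩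
    · rintro ⟨hlo, hhi⟩
      have hcond0 := ((hSmem p0 hp0 k0).mp hk0S).2
      have hcond1 := ((hSmem p0 hp0 k1).mp hk1S).2
      refine (hSmem p0 hp0 k).mpr ⟨le_trans hhi hk1n, ?_, ?_⟩
      · calc (p0 - δ/2) * n ≤ (k0:ℝ) := hcond0.1
          _ ≤ (k:ℝ) := by exact_mod_cast hlo
      · calc (k:ℝ) ≤ (k1:ℝ) := by exact_mod_cast hhi
          _ ≤ (p0 + δ/2)*n := hcond1.2
  -- the fixed polynomial
  set F : ℝ → ℝ := fun p => 1 - ∑ k ∈ S, (n.choose k : ℝ) * p ^ k * (1 - p) ^ (n - k) with hFdef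
  have hF' : ∀ p : ℝ, HasDerivAt F (wfun n (k1+1) p - wfun n k0 p) p := by
    intro p
    have hsum : HasDerivAt (fun x : ℝ => ∑ k ∈ S, (n.choose k : ℝ) * x ^ k * (1 - x) ^ (n - k))
        (∑ k ∈ S, td n k p) p := HasDerivAt.fun_sum (fun k _ => hasDerivAt_term n k p)
    have h := (hasDerivAt_const p (1:ℝ)).fun_sub hsum
    have hid : ∑ k ∈ S, td n k p = wfun n k0 p - wfun n (k1+1) p := by
      rw [hSIcc]
      rw [Finset.sum_congr rfl (fun k hk => td_eq n k
        (le_trans (Finset.mem_Icc.mp hk).2 hk1n) p)]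
      exact tele (fun k => wfun n k p) hk01
    rw [hid] at h
    refine h.congr_deriv ?_
    ring
  have hF'' : ∀ p : ℝ, HasDerivAt (fun x => wfun n (k1+1) x - wfun n k0 x)
      (wd n (k1+1) p - wd n k0 p) p :=
    fun p => (hasDerivAt_wfun n (k1+1) p).sub (hasDerivAt_wfun n k0 p)
  have hFdiff : Differentiable ℝ F := fun p => (hF' p).differentiableAt
  refine convexOn_congr hfS ?_
  refine convexOn_of_hasDerivWithinAt2_nonneg (f' := fun p => wfun n (k1+1) p - wfun n k0 p)
    (f'' := fun p => wd n (k1+1) p - wd n k0 p) (convex_Ioo a b)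
    (hFdiff.continuous.continuousOn)
    (fun x _ => (hF' x).hasDerivWithinAt)
    (fun x _ => (hF'' x).hasDerivWithinAt) ?_
  intro x hx
  rw [interior_Ioo] at hx
  have hx0 : 0 < x := lt_of_le_of_lt ha0 hx.1
  have hx1 : x < 1 := lt_of_lt_of_le hx.2 hb1
  have hk1cond := ((hSmem x hx k1).mp hk1S).2
  have hk0cond := ((hSmem x hx k0).mp hk0S).2
  -- upper part: 0 ≤ wd n (k1+1) x
  have hA : 0 ≤ wd n (k1+1) x := by
    rcases eq_or_lt_of_le hk1n with heq | hlt
    · -- k1 = n : the choose coefficient vanishes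
      have hz : (n-1).choose ((k1+1)-1) = 0 := by
        apply Nat.choose_eq_zero_of_lt
        omega
      simp only [wd, show (k1+1)-1 = k1 from rfl] at *
      rw [show (n-1).choose k1 = 0 from hz]
      simp
    · -- k1 < n
      have hnotin : k1 + 1 ∉ S := fun h => absurd (S.le_max' _ h) (by omega)
      have hncond := (hSmem x hx (k1+1)).not.mp hnotin
      push_neg at hncond
      have hfail := hncond (by omega)
      have hfirst : (x - δ/2) * n ≤ ((k1+1 : ℕ):ℝ) := by
        push_cast
        push_cast at hk1cond
        linarith [hk1cond.1]
      have hsecond := hfail hfirst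
      push_cast at hsecond
      have hnx : (n:ℝ) * x ≤ k1 := by nlinarith
      have hk1pos : 1 ≤ k1 := by
        by_contra h
        push_neg at h
        interval_cases k1
        simp at hnx
        nlinarith
      exact wd_nonneg hx0 hx1 hk1pos hlt hnx
  -- lower part: wd n k0 x ≤ 0
  have hBle : wd n k0 x ≤ 0 := by
    rcases Nat.eq_zero_or_pos k0 with hz | hpos
    · rw [hz]
      simp [wd]
    · obtain ⟨j, hj⟩ : ∃ j, k0 = j + 1 := ⟨k0 - 1, by omega⟩
      have hnotin : j ∉ S := fun h => absurd (S.min'_le _ h) (by omega)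
      have hncond := (hSmem x hx j).not.mp hnotin
      push_neg at hncond
      have hfail := hncond (by omega)
      have hsecond : (j:ℝ) ≤ (x + δ/2) * n := by
        have : ((k0:ℕ):ℝ) ≤ (x + δ/2) * n := hk0cond.2
        have hjk : (j:ℝ) ≤ (k0:ℝ) := by exact_mod_cast (by omega : j ≤ k0)
        linarith
      have hfirst : (j:ℝ) < (x - δ/2) * n := by
        by_contra h
        push_neg at h
        exact absurd hsecond (not_le.mpr (hfail h))
      have hnx : ((j:ℝ) + 1) ≤ (n:ℝ) * x := by nlinarith
      rw [hj]
      exact wd_nonpos hx0 hx1 hnx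
  show (0:ℝ) ≤ wd n (k1+1) x - wd n k0 x
  linarith
end

section
/- Let n ≥ 3 be a natural number and let k ∈ {0, 1, …, n}. Then the function g(p) = p^k (1-p)^{n-k} is convex on the interval [0,1] ∩ [k/n + 1/(2√(n-1)), 1] and convex on the interval [0,1] ∩ [0, k/n - 1/(2√(n-1))]. Equivalently, for every p ∈ [0,1] with |p - k/n| ≥ 1/(2√(n-1)), one has n(n-1)p² - 2k(n-1)p + k(k-1) ≥ 0. -/
open Real

set_option maxHeartbeats 1000000 in
/-- The normalized binomial term `g(p) = p^k (1-p)^{n-k}` is convex on the parts of `[0,1]`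
at distance at least `1/(2√(n-1))` from `k/n`; equivalently the quadratic
`n(n-1)p² - 2k(n-1)p + k(k-1)` is nonnegative there. -/
theorem stmt_6 (n k : ℕ) (hn : 3 ≤ n) (hk : k ≤ n) :
    ConvexOn ℝ (Set.Icc (0 : ℝ) 1 ∩ Set.Ici ((k : ℝ) / n + 1 / (2 * Real.sqrt (n - 1))))
      (fun p : ℝ => p ^ k * (1 - p) ^ (n - k)) ∧
    ConvexOn ℝ (Set.Icc (0 : ℝ) 1 ∩ Set.Iic ((k : ℝ) / n - 1 / (2 * Real.sqrt (n - 1))))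
      (fun p : ℝ => p ^ k * (1 - p) ^ (n - k)) ∧
    ∀ p ∈ Set.Icc (0 : ℝ) 1, 1 / (2 * Real.sqrt (n - 1)) ≤ |p - (k : ℝ) / n| →
      0 ≤ (n : ℝ) * (n - 1) * p ^ 2 - 2 * k * (n - 1) * p + k * (k - 1) := by
  set m := n - k with hm
  have hmn : k + m = n := by omega
  have hn3 : (3:ℝ) ≤ (n:ℝ) := by exact_mod_cast hn
  have hkn : (k:ℝ) ≤ (n:ℝ) := by exact_mod_cast hk
  have hn0 : (0:ℝ) < (n:ℝ) := by linarith
  have hsqpos : 0 < Real.sqrt ((n:ℝ) - 1) := Real.sqrt_pos.mpr (by linarith)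
  have hsq : (Real.sqrt ((n:ℝ) - 1))^2 = (n:ℝ) - 1 := Real.sq_sqrt (by linarith)
  set δ : ℝ := 1 / (2 * Real.sqrt ((n:ℝ) - 1)) with hδ
  have hδpos : 0 < δ := by positivity
  -- quadratic nonnegativity
  have hq : ∀ p : ℝ, δ ≤ |p - (k:ℝ)/n| →
      0 ≤ (n : ℝ) * (n - 1) * p ^ 2 - 2 * k * (n - 1) * p + k * (k - 1) := by
    intro p hp
    have h1 : δ^2 ≤ |p - (k:ℝ)/n|^2 := pow_le_pow_left₀ hδpos.le hp 2
    rw [sq_abs] at h1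
    have h2 : δ^2 = 1/(4*((n:ℝ)-1)) := by
      rw [hδ, div_pow, mul_pow, hsq]; norm_num
    have h3 : 1 ≤ 4*((n:ℝ)-1)*(p - (k:ℝ)/n)^2 := by
      rw [h2] at h1
      rw [div_le_iff₀ (by linarith)] at h1
      linarith [h1]
    have hk2 : 4*(k:ℝ)*((n:ℝ)-k) ≤ (n:ℝ)^2 := by nlinarith [sq_nonneg ((n:ℝ) - 2*k)]
    have hid : (n:ℝ) * ((n : ℝ) * (n - 1) * p ^ 2 - 2 * k * (n - 1) * p + k * (k - 1))
        = ((n:ℝ)-1)*((n:ℝ)*(p - (k:ℝ)/n))^2 - k*((n:ℝ)-k) := by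
      field_simp
      ring
    have h4 : 0 ≤ (n:ℝ) * ((n : ℝ) * (n - 1) * p ^ 2 - 2 * k * (n - 1) * p + k * (k - 1)) := by
      rw [hid]
      have : ((n:ℝ)*(p - (k:ℝ)/n))^2 = (n:ℝ)^2 * (p - (k:ℝ)/n)^2 := by ring
      rw [this]
      nlinarith [h3, hk2, sq_nonneg (p - (k:ℝ)/n)]
    nlinarith [h4]
  -- derivatives
  set f : ℝ → ℝ := fun p => p ^ k * (1 - p) ^ m with hf
  set f₁ : ℝ → ℝ := fun p => (k:ℝ)*p^(k-1)*(1-p)^m - (m:ℝ)*p^k*(1-p)^(m-1) with hf₁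
  set f₂ : ℝ → ℝ := fun p => (k:ℝ)*((k-1:ℕ):ℝ)*p^(k-2)*(1-p)^m
      - 2*(k:ℝ)*(m:ℝ)*p^(k-1)*(1-p)^(m-1) + (m:ℝ)*((m-1:ℕ):ℝ)*p^k*(1-p)^(m-2) with hf₂
  have hone : ∀ (j : ℕ) (p : ℝ), HasDerivAt (fun q : ℝ => (1-q)^j) (-((j:ℝ)*(1-p)^(j-1))) p := by
    intro j p
    have h := ((hasDerivAt_id p).const_sub 1).fun_pow j
    refine h.congr_deriv ?_
    simp [id]
  have hd1 : ∀ p : ℝ, HasDerivAt f (f₁ p) p := by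
    intro p
    have h := (hasDerivAt_pow k p).fun_mul (hone m p)
    refine h.congr_deriv ?_
    simp [hf₁]
    ring
  have hd2 : ∀ p : ℝ, HasDerivAt f₁ (f₂ p) p := by
    intro p
    have e1 : k - 1 - 1 = k - 2 := by omega
    have e2 : m - 1 - 1 = m - 2 := by omega
    have h := (((hasDerivAt_pow (k-1) p).const_mul (k:ℝ)).fun_mul (hone m p)).sub
      (((hasDerivAt_pow k p).const_mul (m:ℝ)).fun_mul (hone (m-1) p))
    rw [e1, e2] at h
    refine h.congr_deriv ?_
    simp [hf₂]
    ring
  have hdf : deriv f = f₁ := funext fun p => (hd1 p).deriv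
  have hdf2 : ∀ p, deriv^[2] f p = f₂ p := by
    intro p
    show deriv (deriv f) p = f₂ p
    rw [hdf]
    exact (hd2 p).deriv
  -- key identity
  have hI : ∀ p : ℝ, f₂ p * (p^2*(1-p)^2) =
      ((n : ℝ) * (n - 1) * p ^ 2 - 2 * k * (n - 1) * p + k * (k - 1)) * (p^k * (1-p)^m) := by
    have hncast : (n:ℝ) = (k:ℝ) + (m:ℝ) := by exact_mod_cast hmn.symm
    intro p
    rw [hncast, hf₂]
    rcases k with _|_|k <;> rcases m with _|_|m <;>
      simp only [Nat.add_sub_cancel, Nat.succ_sub_one, Nat.zero_sub, Nat.cast_zero,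
        Nat.cast_one, Nat.cast_add, Nat.cast_ofNat, pow_zero, pow_succ] <;>
      push_cast <;> ring
  -- nonnegativity of f₂ on (0,1) with distance condition
  have hf2nn : ∀ p : ℝ, 0 < p → p < 1 → δ ≤ |p - (k:ℝ)/n| → 0 ≤ f₂ p := by
    intro p hp0 hp1 hpd
    have hq' := hq p hpd
    have hpos : 0 < p^2*(1-p)^2 := mul_pos (pow_pos hp0 2) (pow_pos (by linarith) 2)
    have := hI p
    nlinarith [mul_nonneg hq' (mul_nonneg (pow_nonneg hp0.le k) (pow_nonneg (by linarith : (0:ℝ) ≤ 1-p) m))]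
  have hcont : ContinuousOn f (Set.univ) := (((continuous_pow k).mul ((continuous_const.sub continuous_id).pow m))).continuousOn
  -- assemble convexity
  have conv1 : ConvexOn ℝ (Set.Icc (0 : ℝ) 1 ∩ Set.Ici ((k : ℝ) / n + δ)) f := by
    apply convexOn_of_deriv2_nonneg ((convex_Icc 0 1).inter (convex_Ici _))
    · exact (((continuous_pow k).mul ((continuous_const.sub continuous_id).pow m))).continuousOn
    · exact fun x _ => (hd1 x).differentiableAt.differentiableWithinAt
    · rw [hdf]; exact fun x _ => (hd2 x).differentiableAt.differentiableWithinAt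
    · intro x hx
      rw [interior_inter, interior_Icc, interior_Ici] at hx
      obtain ⟨⟨hx0, hx1⟩, hxa⟩ := hx
      rw [hdf2]
      apply hf2nn x hx0 hx1
      have hxa' : (k:ℝ)/n + δ < x := hxa
      calc δ ≤ x - (k:ℝ)/n := by linarith
        _ ≤ |x - (k:ℝ)/n| := le_abs_self _
  have conv2 : ConvexOn ℝ (Set.Icc (0 : ℝ) 1 ∩ Set.Iic ((k : ℝ) / n - δ)) f := by
    apply convexOn_of_deriv2_nonneg ((convex_Icc 0 1).inter (convex_Iic _))
    · exact (((continuous_pow k).mul ((continuous_const.sub continuous_id).pow m))).continuousOn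
    · exact fun x _ => (hd1 x).differentiableAt.differentiableWithinAt
    · rw [hdf]; exact fun x _ => (hd2 x).differentiableAt.differentiableWithinAt
    · intro x hx
      rw [interior_inter, interior_Icc, interior_Iic] at hx
      obtain ⟨⟨hx0, hx1⟩, hxa⟩ := hx
      rw [hdf2]
      apply hf2nn x hx0 hx1
      have hxa' : x < (k:ℝ)/n - δ := hxa
      calc δ ≤ (k:ℝ)/n - x := by linarith
        _ ≤ |x - (k:ℝ)/n| := by rw [abs_sub_comm]; exact le_abs_self _
  exact ⟨conv1, conv2, fun p _ hp => hq p hp⟩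
end

section
/- Let n be a positive natural number, α ∈ [0, π/2], p_x = (1 + cos α)/2, p_y = (1 + sin α)/2, and K_n = { (i,j) : i, j ∈ {0,…,n}, j ≥ n - i + 1 }. Then 1 - ∑_{(i,j) ∈ K_n} C(n,i) C(n,j) p_x^i (1-p_x)^{n-i} p_y^j (1-p_y)^{n-j} ≤ 2/2^n. -/
open Real Finset

set_option maxHeartbeats 1600000

/-- Theorem 4 (majority-sampling error bound): for `α ∈ [0, π/2]`, the probability that
the pair of success counts `(i, j)` of `n` Bernoulli(`p_x`) and `n` Bernoulli(`p_y`)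
trials misses the success set `K_n = {(i,j) : j ≥ n - i + 1}` is at most `2/2^n`. -/
theorem stmt_7 (n : ℕ) (hn : 0 < n) (α : ℝ) (hα : α ∈ Set.Icc 0 (π / 2))
    (px py : ℝ) (hpx : px = (1 + Real.cos α) / 2) (hpy : py = (1 + Real.sin α) / 2) :
    1 - ∑ q ∈ (Finset.range (n + 1) ×ˢ Finset.range (n + 1)).filter
        (fun q => n - q.1 + 1 ≤ q.2),
        (n.choose q.1 : ℝ) * (n.choose q.2 : ℝ) * px ^ q.1 * (1 - px) ^ (n - q.1) *
          py ^ q.2 * (1 - py) ^ (n - q.2) ≤ 2 / 2 ^ n := by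
  obtain ⟨hα0, hα2⟩ := hα
  have hpi := Real.pi_pos
  have hs0 : 0 ≤ Real.sin α := Real.sin_nonneg_of_nonneg_of_le_pi hα0 (by linarith)
  have hc0 : 0 ≤ Real.cos α := Real.cos_nonneg_of_mem_Icc ⟨by linarith, hα2⟩
  have hs1 : Real.sin α ≤ 1 := Real.sin_le_one α
  have hc1 : Real.cos α ≤ 1 := Real.cos_le_one α
  have hsq : Real.sin α ^ 2 + Real.cos α ^ 2 = 1 := Real.sin_sq_add_cos_sq α
  set s := Real.sin α with hsdef
  set c := Real.cos α with hcdef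
  set a : ℝ := 1 - px with ha
  set b : ℝ := 1 - py with hb
  have ha' : a = (1 - c) / 2 := by rw [ha, hpx]; ring
  have hb' : b = (1 - s) / 2 := by rw [hb, hpy]; ring
  have hn' : (0:ℝ) < n := by exact_mod_cast hn
  have hpx0 : 0 ≤ px := by rw [hpx]; linarith
  have hpy0 : 0 ≤ py := by rw [hpy]; linarith
  have ha0 : 0 ≤ a := by rw [ha']; linarith
  have hb0 : 0 ≤ b := by rw [hb']; linarith
  set δ : ℝ := Real.log 2 / (2 * n) with hδdef
  have hlog2 : 0 < Real.log 2 := Real.log_pos (by norm_num)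
  have hδ0 : 0 < δ := by
    apply div_pos hlog2; linarith
  set t : ℝ := s * c / 4 + δ with htdef
  have hsc0 : 0 ≤ s * c := mul_nonneg hs0 hc0
  have ht0 : 0 < t := by rw [htdef]; linarith
  set w : ℝ := Real.sqrt t with hwdef
  have hw0 : 0 < w := Real.sqrt_pos.2 ht0
  have hw2 : w ^ 2 = t := Real.sq_sqrt ht0.le
  have hsc1 : 1 ≤ s + c := by
    nlinarith [mul_nonneg hs0 (sub_nonneg.2 hs1), mul_nonneg hc0 (sub_nonneg.2 hc1)]
  have hab_le : a * b ≤ t := by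
    rw [ha', hb', htdef]; nlinarith
  have hab0 : 0 ≤ a * b := mul_nonneg ha0 hb0
  clear_value s c a b δ t w
  have binom : ∀ x y : ℝ, ∑ i ∈ range (n + 1), (n.choose i : ℝ) * x ^ i * y ^ (n - i)
      = (x + y) ^ n := by
    intro x y
    rw [add_pow]
    apply Finset.sum_congr rfl
    intro i _
    ring
  have hpa : px + a = 1 := by rw [ha]; ring
  have hpb : py + b = 1 := by rw [hb]; ring
  set f : ℕ × ℕ → ℝ := fun q =>
    (n.choose q.1 : ℝ) * (n.choose q.2 : ℝ) * px ^ q.1 * a ^ (n - q.1) *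
      py ^ q.2 * b ^ (n - q.2) with hf
  clear_value f
  have htot : ∑ q ∈ (Finset.range (n + 1) ×ˢ Finset.range (n + 1)), f q = 1 := by
    rw [Finset.sum_product]
    calc ∑ i ∈ range (n + 1), ∑ j ∈ range (n + 1), f (i, j)
        = ∑ i ∈ range (n + 1), (((n.choose i : ℝ) * px ^ i * a ^ (n - i)) *
            ∑ j ∈ range (n + 1), ((n.choose j : ℝ) * py ^ j * b ^ (n - j))) := by
          apply Finset.sum_congr rfl
          intro i _
          rw [Finset.mul_sum]
          apply Finset.sum_congr rfl
          intro j _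
          simp only [hf]
          ring
      _ = (∑ i ∈ range (n + 1), (n.choose i : ℝ) * px ^ i * a ^ (n - i)) *
          (∑ j ∈ range (n + 1), (n.choose j : ℝ) * py ^ j * b ^ (n - j)) := by
          rw [Finset.sum_mul]
      _ = 1 := by rw [binom, binom, hpa, hpb]; norm_num
  have hsplit := Finset.sum_filter_add_sum_filter_not
    (Finset.range (n + 1) ×ˢ Finset.range (n + 1)) (fun q => n - q.1 + 1 ≤ q.2) f
  have hgoal_eq : 1 - ∑ q ∈ (Finset.range (n + 1) ×ˢ Finset.range (n + 1)).filter
        (fun q => n - q.1 + 1 ≤ q.2), f q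
      = ∑ q ∈ (Finset.range (n + 1) ×ˢ Finset.range (n + 1)).filter
        (fun q => ¬ (n - q.1 + 1 ≤ q.2)), f q := by
    rw [← htot, ← hsplit]; ring
  show 1 - ∑ q ∈ (Finset.range (n + 1) ×ˢ Finset.range (n + 1)).filter
        (fun q => n - q.1 + 1 ≤ q.2), f q ≤ 2 / 2 ^ n
  rw [hgoal_eq]
  set F : ℕ → ℝ := fun i => (n.choose i : ℝ) * (px * b / w) ^ i * w ^ (n - i) with hF
  set G : ℕ → ℝ := fun j => (n.choose j : ℝ) * (py * a / w) ^ j * w ^ (n - j) with hG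
  clear_value F G
  have key : ∀ q ∈ (Finset.range (n + 1) ×ˢ Finset.range (n + 1)).filter
      (fun q => ¬ (n - q.1 + 1 ≤ q.2)), f q ≤ F q.1 * G q.2 := by
    rintro ⟨i, j⟩ hq
    simp only [Finset.mem_filter, Finset.mem_product, Finset.mem_range] at hq
    obtain ⟨⟨hi, hj⟩, hcond⟩ := hq
    obtain ⟨k, hk⟩ : ∃ k, i + j + k = n := ⟨n - (i + j), by omega⟩
    have h1 : n - i = j + k := by omega
    have h2 : n - j = i + k := by omega
    simp only [hf, hF, hG]
    rw [h1, h2]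
    have hRHS : (n.choose i : ℝ) * (px * b / w) ^ i * w ^ (j + k) *
        ((n.choose j : ℝ) * (py * a / w) ^ j * w ^ (i + k))
        = ((n.choose i : ℝ) * (n.choose j : ℝ)) * ((px * b) ^ i * (py * a) ^ j) * t ^ k := by
      rw [← hw2, div_pow, div_pow]
      field_simp
      ring
    have hLHS : (n.choose i : ℝ) * (n.choose j : ℝ) * px ^ i * a ^ (j + k) *
        py ^ j * b ^ (i + k)
        = ((n.choose i : ℝ) * (n.choose j : ℝ)) * ((px * b) ^ i * (py * a) ^ j) * (a * b) ^ k := by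
      rw [pow_add, pow_add, mul_pow px b, mul_pow py a, mul_pow a b]
      ring
    rw [hRHS, hLHS]
    apply mul_le_mul_of_nonneg_left (pow_le_pow_left₀ hab0 hab_le k)
    positivity
  have hbase : (px * b / w + w) * (py * a / w + w) ≤ 1 / 2 + δ := by
    have hexp : (px * b / w + w) * (py * a / w + w)
        = (px * b) * (py * a) / t + px * b + py * a + t := by
      rw [← hw2]
      field_simp
      ring
    have hP : px * b = (1 + c) * (1 - s) / 4 := by rw [hpx, hb']; ring
    have hQ : py * a = (1 + s) * (1 - c) / 4 := by rw [hpy, ha']; ring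
    have hnum : ((1 + c) * (1 - s) / 4) * ((1 + s) * (1 - c) / 4) = (s * c / 4) ^ 2 := by
      linear_combination (-(1:ℝ)/16) * hsq
    have ht' : t = s * c / 4 + δ := htdef
    have hdiv : (s * c / 4) ^ 2 / t ≤ s * c / 4 := by
      rw [div_le_iff₀ ht0, pow_two]
      have hts : s * c / 4 ≤ t := by rw [ht']; linarith
      exact mul_le_mul_of_nonneg_left hts (by linarith)
    rw [hexp, hP, hQ, hnum]
    linarith [hdiv, ht'.le, ht'.ge]
  calc ∑ q ∈ (Finset.range (n + 1) ×ˢ Finset.range (n + 1)).filter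
        (fun q => ¬ (n - q.1 + 1 ≤ q.2)), f q
      ≤ ∑ q ∈ (Finset.range (n + 1) ×ˢ Finset.range (n + 1)).filter
        (fun q => ¬ (n - q.1 + 1 ≤ q.2)), F q.1 * G q.2 := Finset.sum_le_sum key
    _ ≤ ∑ q ∈ (Finset.range (n + 1) ×ˢ Finset.range (n + 1)), F q.1 * G q.2 := by
        apply Finset.sum_le_sum_of_subset_of_nonneg (Finset.filter_subset _ _)
        intro q _ _
        simp only [hF, hG]
        positivity
    _ = (∑ i ∈ range (n + 1), F i) * (∑ j ∈ range (n + 1), G j) := by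
        rw [Finset.sum_product, ← Finset.sum_mul_sum]
    _ = ((px * b / w + w) * (py * a / w + w)) ^ n := by
        simp only [hF, hG]
        rw [binom, binom, mul_pow]
    _ ≤ (1 / 2 + δ) ^ n := by
        apply pow_le_pow_left₀ _ hbase
        positivity
    _ ≤ 2 / 2 ^ n := by
        have h1 : (1:ℝ) / 2 + δ = (1 + 2 * δ) / 2 := by ring
        rw [h1, div_pow]
        have h2 : (1 + 2 * δ) ^ n ≤ 2 := by
          have h3 : 1 + 2 * δ ≤ Real.exp (2 * δ) := by
            linarith [Real.add_one_le_exp (2 * δ)]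
          have h4 : (1 + 2 * δ) ^ n ≤ Real.exp (2 * δ) ^ n :=
            pow_le_pow_left₀ (by linarith) h3 n
          have h5 : Real.exp (2 * δ) ^ n = Real.exp (n * (2 * δ)) := by
            rw [← Real.exp_nat_mul]
          have h6 : (n : ℝ) * (2 * δ) = Real.log 2 := by
            rw [hδdef]; field_simp
          rw [h5, h6, Real.exp_log (by norm_num)] at h4
          exact h4
        gcongr
end

section
/- Let n be a positive natural number, α ∈ [0, π/2], p_x = (1 + cos α)/2, and p_y = (1 + sin α)/2. Then the main-diagonal sum d_n = ∑_{j=0}^{n} C(n,j)² · p_x^{n-j} (1-p_x)^{j} · p_y^{j} (1-p_y)^{n-j} satisfies d_n ≤ 2^{-n}. -/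
open Real Finset

lemma sum_sq_le_sq_sum (n : ℕ) (x : ℕ → ℝ) (hx : ∀ j ∈ Finset.range (n+1), 0 ≤ x j) :
    ∑ j ∈ Finset.range (n+1), (x j)^2 ≤ (∑ j ∈ Finset.range (n+1), x j)^2 := by
  have hS : ∀ j ∈ Finset.range (n+1), x j ≤ ∑ i ∈ Finset.range (n+1), x i := by
    intro j hj
    exact Finset.single_le_sum hx hj
  calc ∑ j ∈ Finset.range (n+1), (x j)^2
      ≤ ∑ j ∈ Finset.range (n+1), x j * (∑ i ∈ Finset.range (n+1), x i) := by
        refine Finset.sum_le_sum fun j hj => ?_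
        have := hS j hj
        have h0 := hx j hj
        nlinarith
    _ = (∑ j ∈ Finset.range (n+1), x j)^2 := by
        rw [← Finset.sum_mul]; ring

/-- The main-diagonal sum `d_n` of the two-dimensional binomial distribution with
`p_x = (1+cos α)/2`, `p_y = (1+sin α)/2` is at most `2^{-n}`. -/
theorem stmt_8 (n : ℕ) (hn : 0 < n) (α : ℝ) (hα : α ∈ Set.Icc 0 (π / 2))
    (px py : ℝ) (hpx : px = (1 + Real.cos α) / 2) (hpy : py = (1 + Real.sin α) / 2) :
    ∑ j ∈ Finset.range (n + 1),
        (n.choose j : ℝ) ^ 2 * px ^ (n - j) * (1 - px) ^ j * py ^ j * (1 - py) ^ (n - j) ≤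
      (2 : ℝ) ^ (-(n : ℤ)) := by
  obtain ⟨hα0, hα2⟩ := hα
  set β := α / 2 with hβdef
  have hαβ : α = 2 * β := by rw [hβdef]; ring
  have hc : Real.cos α = 2 * Real.cos β ^ 2 - 1 := by rw [hαβ, Real.cos_two_mul]
  have hs : Real.sin α = 2 * Real.sin β * Real.cos β := by rw [hαβ, Real.sin_two_mul]
  have hpyt : Real.sin β ^ 2 + Real.cos β ^ 2 = 1 := Real.sin_sq_add_cos_sq β
  have hβ0 : 0 ≤ β := by rw [hβdef]; linarith
  have hβ4 : β ≤ π / 4 := by rw [hβdef]; linarith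
  have hpi : 0 < π := Real.pi_pos
  have hsβ : 0 ≤ Real.sin β := Real.sin_nonneg_of_nonneg_of_le_pi hβ0 (by linarith)
  have hcβ : 0 < Real.cos β := Real.cos_pos_of_mem_Ioo ⟨by linarith, by linarith⟩
  have hcosα : 0 ≤ Real.cos α := Real.cos_nonneg_of_mem_Icc ⟨by linarith, hα2⟩
  have hsc : Real.sin β ≤ Real.cos β := by nlinarith [hcosα, hc, hpyt]
  have h2 : Real.sqrt 2 ^ 2 = 2 := Real.sq_sqrt (by norm_num)
  have h2pos : 0 < Real.sqrt 2 := Real.sqrt_pos.mpr (by norm_num)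
  set a := Real.cos β * (Real.cos β - Real.sin β) / Real.sqrt 2 with hadef
  set b := Real.sin β * (Real.cos β + Real.sin β) / Real.sqrt 2 with hbdef
  have ha : 0 ≤ a := by
    apply div_nonneg _ h2pos.le
    exact mul_nonneg hcβ.le (by linarith)
  have hb : 0 ≤ b := by
    apply div_nonneg _ h2pos.le
    exact mul_nonneg hsβ (by linarith)
  have hab : a + b = 1 / Real.sqrt 2 := by
    rw [hadef, hbdef, ← add_div]
    congr 1
    nlinarith [hpyt]
  have ha2 : a ^ 2 = px * (1 - py) := by
    rw [hadef, hpx, hpy, hc, hs, div_pow, h2]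
    linear_combination (Real.cos β ^ 2 / 2) * hpyt
  have hb2 : b ^ 2 = (1 - px) * py := by
    rw [hbdef, hpx, hpy, hc, hs, div_pow, h2]
    linear_combination ((Real.sin β ^ 2 + 2 * Real.sin β * Real.cos β + 1) / 2) * hpyt
  have hterm : ∀ j ∈ Finset.range (n + 1),
      (n.choose j : ℝ) ^ 2 * px ^ (n - j) * (1 - px) ^ j * py ^ j * (1 - py) ^ (n - j)
        = ((n.choose j : ℝ) * a ^ (n - j) * b ^ j) ^ 2 := by
    intro j hj
    calc (n.choose j : ℝ) ^ 2 * px ^ (n - j) * (1 - px) ^ j * py ^ j * (1 - py) ^ (n - j)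
        = (n.choose j : ℝ) ^ 2 * (px * (1 - py)) ^ (n - j) * ((1 - px) * py) ^ j := by
          rw [mul_pow, mul_pow]; ring
      _ = (n.choose j : ℝ) ^ 2 * (a ^ 2) ^ (n - j) * (b ^ 2) ^ j := by rw [ha2, hb2]
      _ = ((n.choose j : ℝ) * a ^ (n - j) * b ^ j) ^ 2 := by
          rw [pow_right_comm a 2 (n - j), pow_right_comm b 2 j]; ring
  rw [Finset.sum_congr rfl hterm]
  have key := sum_sq_le_sq_sum n (fun j => (n.choose j : ℝ) * a ^ (n - j) * b ^ j)
    (fun j hj => by positivity)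
  refine le_trans key ?_
  have hbinom : ∑ j ∈ Finset.range (n + 1), (n.choose j : ℝ) * a ^ (n - j) * b ^ j
      = (a + b) ^ n := by
    rw [add_comm a b, add_pow]
    refine Finset.sum_congr rfl fun j hj => ?_
    ring
  rw [hbinom, hab]
  have : ((1 / Real.sqrt 2) ^ n) ^ 2 = ((1:ℝ) / 2) ^ n := by
    rw [← pow_mul, mul_comm n 2, pow_mul, div_pow, h2, one_pow]
  rw [this]
  rw [zpow_neg, zpow_natCast]
  rw [div_pow, one_pow]
  rw [one_div]
end

section
/- For all natural numbers k, m with 1 ≤ k ≤ m, ∑_{j=k}^{m} sin²(π/2^{j+2}) ≤ (π²/12)·4^{-k}. -/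
open Real Finset

/-- Bound on the combined single-measurement failure probability:
`∑_{j=k}^{m} sin²(π/2^{j+2}) ≤ (π²/12)·4^{-k}` for `1 ≤ k ≤ m`. -/
theorem stmt_16 (k m : ℕ) (hk : 1 ≤ k) (hkm : k ≤ m) :
    ∑ j ∈ Finset.Icc k m, Real.sin (π / 2 ^ (j + 2)) ^ 2 ≤
      π ^ 2 / 12 * (4 : ℝ) ^ (-(k : ℤ)) := by
  have hstep : ∀ j ∈ Finset.Icc k m,
      Real.sin (π / 2 ^ (j + 2)) ^ 2 ≤ π ^ 2 / 16 * (1 / 4 : ℝ) ^ j := by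
    intro j _
    have hx : (0:ℝ) ≤ π / 2 ^ (j + 2) := by positivity
    have hsin : Real.sin (π / 2 ^ (j + 2)) ≤ π / 2 ^ (j + 2) :=
      Real.sin_le hx
    have hsin0 : 0 ≤ Real.sin (π / 2 ^ (j + 2)) := by
      apply Real.sin_nonneg_of_nonneg_of_le_pi hx
      have h2 : (1:ℝ) ≤ 2 ^ (j + 2) := one_le_pow₀ (by norm_num)
      calc π / 2 ^ (j + 2) ≤ π / 1 := by
            apply div_le_div_of_nonneg_left pi_pos.le one_pos h2
        _ = π := by ring
    calc Real.sin (π / 2 ^ (j + 2)) ^ 2 ≤ (π / 2 ^ (j + 2)) ^ 2 :=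
          pow_le_pow_left₀ hsin0 hsin 2
      _ = π ^ 2 / 16 * (1 / 4 : ℝ) ^ j := by
          rw [div_pow, ← pow_mul, div_pow, one_pow]
          ring_nf
          rw [show ((2:ℝ)⁻¹)^(j*2) = (4⁻¹)^j by rw [mul_comm, pow_mul]; norm_num]
  have hgeom : ∑ j ∈ Finset.Icc k m, (1 / 4 : ℝ) ^ j ≤ (1/4:ℝ)^k * (4/3) := by
    have : Finset.Icc k m = Finset.Ico k (m+1) := by
      rw [Finset.Ico_add_one_right_eq_Icc]
    rw [this, geom_sum_Ico (by norm_num : (1/4:ℝ) ≠ 1) (Nat.le_succ_of_le hkm),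
      div_le_iff_of_neg (by norm_num : (1/4:ℝ) - 1 < 0)]
    nlinarith [pow_nonneg (by norm_num : (0:ℝ) ≤ 1/4) (m.succ),
      pow_nonneg (by norm_num : (0:ℝ) ≤ 1/4) k]
  calc ∑ j ∈ Finset.Icc k m, Real.sin (π / 2 ^ (j + 2)) ^ 2
      ≤ ∑ j ∈ Finset.Icc k m, π ^ 2 / 16 * (1 / 4 : ℝ) ^ j :=
        Finset.sum_le_sum hstep
    _ = π ^ 2 / 16 * ∑ j ∈ Finset.Icc k m, (1 / 4 : ℝ) ^ j := by
        rw [Finset.mul_sum]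
    _ ≤ π ^ 2 / 16 * ((1/4:ℝ)^k * (4/3)) := by
        apply mul_le_mul_of_nonneg_left hgeom (by positivity)
    _ = π ^ 2 / 12 * (4 : ℝ) ^ (-(k : ℤ)) := by
        rw [zpow_neg, zpow_natCast]
        rw [show ((1:ℝ)/4)^k = ((4:ℝ)^k)⁻¹ by rw [one_div, inv_pow]]
        ring
end
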